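/- Let Q be the Ehrenfeucht–Mostowski type over A of a Lascar special sequence over A, and let φ(x,b) be a formula. Then there exists a realization J of Q which eventually determines φ(x,b), i.e. the limit truth value of φ(x,b) is the same along every A-indiscernible continuation of J. -/

import Mathlib

/- Background framework: we work in a big ("monster") model `M` of a complete
first-order theory, with tuples represented as functions `β → M`, and formulas with
parameters represented as `L.Formula (Fin n ⊕ β)`, where the `Fin n`-part is used for a
tuple of parameters and the `β`-part for the free variables. -/

open FirstOrder

universe u v w

namespace PaperNIP

variable (L : FirstOrder.Language.{u, u}) {M : Type u} [L.Structure M]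

/-- The sequence `I` of `β`-tuples, indexed by the linear order `O`, is
indiscernible over the set `A`: the type of a finite increasing subtuple over `A`
depends only on the order of the indices. -/
def IndiscOver (A : Set M) {O : Type*} [LinearOrder O] {β : Type*} (I : O → β → M) : Prop :=
  ∀ (m k : ℕ) (φ : L.Formula (Fin m ⊕ (Fin k × β))) (as : Fin m → M),
    (∀ t, as t ∈ A) →
    ∀ i j : Fin k → O, StrictMono i → StrictMono j →
      (φ.Realize (Sum.elim as fun p => I (i p.1) p.2) ↔
        φ.Realize (Sum.elim as fun p => I (j p.1) p.2))

/-- `I` is an indiscernible *set* over `A`: the type of a finite subtuple of (distinct)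
elements over `A` does not depend on the (order of the) indices at all. -/
def IndiscSetOver (A : Set M) {O : Type*} {β : Type*} (I : O → β → M) : Prop :=
  ∀ (m k : ℕ) (φ : L.Formula (Fin m ⊕ (Fin k × β))) (as : Fin m → M),
    (∀ t, as t ∈ A) →
    ∀ i j : Fin k → O, Function.Injective i → Function.Injective j →
      (φ.Realize (Sum.elim as fun p => I (i p.1) p.2) ↔
        φ.Realize (Sum.elim as fun p => I (j p.1) p.2))

/-- The theory of `M` is dependent (NIP): along any indiscernible sequence (with no last
element), the truth value of any formula (with parameters) is eventually constant. -/
def Dependent : Prop :=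
  ∀ (O : Type u) [LinearOrder O] [Nonempty O] [NoMaxOrder O] (r : ℕ) (I : O → Fin r → M),
    IndiscOver L (∅ : Set M) I →
    ∀ (n : ℕ) (φ : L.Formula (Fin n ⊕ Fin r)) (c : Fin n → M),
      ∃ i₀ : O, ∀ i j : O, i₀ ≤ i → i₀ ≤ j →
        (φ.Realize (Sum.elim c (I i)) ↔ φ.Realize (Sum.elim c (I j)))

/-- The set of elements appearing in the sequence `I`. -/
def seqSet {O : Type*} {β : Type*} (I : O → β → M) : Set M :=
  ⋃ i, Set.range (I i)

/-- The set of elements appearing in `I` strictly before the index `i`. -/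
def below {O : Type*} [LinearOrder O] {β : Type*} (I : O → β → M) (i : O) : Set M :=
  {x | ∃ j < i, ∃ t, I j t = x}

/-- The single (infinite) tuple obtained from a sequence of tuples. -/
def seqUncurry {O : Type*} {β : Type*} (I : O → β → M) : O × β → M :=
  fun p => I p.1 p.2

/-- The sequence `I` extended by one further element `c` (placed after all of `I`). -/
def consTop {O : Type*} {β : Type*} (I : O → β → M) (c : β → M) : WithTop O → β → M :=
  fun o => WithTop.recTopCoe c I o

/-- Concatenation of two sequences, indexed by the lexicographic sum of the orders. -/
def concatSeq {O O' : Type*} {β : Type*} (I : O → β → M) (J : O' → β → M) :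
    (O ⊕ₗ O') → β → M :=
  fun o => Sum.elim I J (ofLex o)

/-- `J` continues `I` over `A` : the concatenation `I ⌢ J` is `A`-indiscernible. -/
def Continues (A : Set M) {O O' : Type*} [LinearOrder O] [LinearOrder O'] {β : Type*}
    (I : O → β → M) (J : O' → β → M) : Prop :=
  IndiscOver L A (concatSeq I J)

/-- Membership in the global average type `Av(I, 𝔠)` of the sequence `I` :
`φ(x, b)` belongs to it iff `φ(x, b)` is eventually satisfied by the elements of `I`. -/
def AvMem {O : Type*} [LinearOrder O] {β : Type*} (I : O → β → M)
    (n : ℕ) (φ : L.Formula (Fin n ⊕ β)) (b : Fin n → M) : Prop :=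
  ∃ i₀ : O, ∀ i, i₀ ≤ i → φ.Realize (Sum.elim b (I i))

/-- Membership in the average type `Av(I, B)` of the sequence `I` over the set `B`. -/
def AvMemOver {O : Type*} [LinearOrder O] {β : Type*} (I : O → β → M) (B : Set M)
    (n : ℕ) (φ : L.Formula (Fin n ⊕ β)) (b : Fin n → M) : Prop :=
  (∀ t, b t ∈ B) ∧ AvMem L I n φ b

/-- Two tuples have the same type over `A`. -/
def SameTp (A : Set M) {β : Type*} (a b : β → M) : Prop :=
  ∀ (m : ℕ) (φ : L.Formula (Fin m ⊕ β)) (as : Fin m → M), (∀ t, as t ∈ A) →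
    (φ.Realize (Sum.elim as a) ↔ φ.Realize (Sum.elim as b))

/-- Two tuples have the same Lascar strong type over `A`: they are equivalent under the
transitive closure of the relation "being two distinct terms of an infinite
`A`-indiscernible sequence". -/
def SameLstp (A : Set M) {β : Type*} : (β → M) → (β → M) → Prop :=
  Relation.TransGen fun x y =>
    ∃ I : ℕ → β → M, IndiscOver L A I ∧ ∃ i j : ℕ, i ≠ j ∧ I i = x ∧ I j = y

/-- The sequences `I` (indexed by `O`) and `J` (indexed by `O'`) realize the same
Ehrenfeucht–Mostowski type over `A`. -/
def SameEM (A : Set M) {O O' : Type*} [LinearOrder O] [LinearOrder O'] {β : Type*}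
    (I : O → β → M) (J : O' → β → M) : Prop :=
  ∀ (m k : ℕ) (φ : L.Formula (Fin m ⊕ (Fin k × β))) (as : Fin m → M), (∀ t, as t ∈ A) →
    ∀ (i : Fin k → O) (j : Fin k → O'), StrictMono i → StrictMono j →
      (φ.Realize (Sum.elim as fun p => I (i p.1) p.2) ↔
        φ.Realize (Sum.elim as fun p => J (j p.1) p.2))

/-- A single formula `φ(x, b)` divides over `A`: there is an `A`-indiscernible sequence
of parameter tuples starting with `b` along which the family of instances of `φ` is
inconsistent (some finite subfamily is unsatisfiable). -/
def Divides (A : Set M) {n : ℕ} {β : Type*} (φ : L.Formula (Fin n ⊕ β))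
    (b : Fin n → M) : Prop :=
  ∃ bs : ℕ → Fin n → M, bs 0 = b ∧ IndiscOver L A bs ∧
    ∃ s : Finset ℕ, ¬ ∃ x : β → M, ∀ t ∈ s, φ.Realize (Sum.elim (bs t) x)

/-- The finite conjunction `⋀ i, φs i (x, bs i)` divides over `A`. -/
def FamilyDivides (A : Set M) {β : Type*} (k : ℕ) (ns : Fin k → ℕ)
    (φs : ∀ i, L.Formula (Fin (ns i) ⊕ β)) (bs : ∀ i, Fin (ns i) → M) : Prop :=
  ∃ Bs : ℕ → ∀ i, Fin (ns i) → M, Bs 0 = bs ∧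
    IndiscOver L A (fun t (p : Σ i, Fin (ns i)) => Bs t p.1 p.2) ∧
    ∃ s : Finset ℕ, ¬ ∃ x : β → M, ∀ t ∈ s, ∀ i, (φs i).Realize (Sum.elim (Bs t i) x)

/-- A single formula `φ(x, b)` forks over `A`: it implies (in the monster) a finite
disjunction of formulas each of which divides over `A`. -/
def Forks (A : Set M) {n : ℕ} {β : Type*} (φ : L.Formula (Fin n ⊕ β))
    (b : Fin n → M) : Prop :=
  ∃ (m : ℕ) (ms : Fin m → ℕ) (ψs : ∀ j, L.Formula (Fin (ms j) ⊕ β))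
    (cs : ∀ j, Fin (ms j) → M),
    (∀ j, Divides L A (ψs j) (cs j)) ∧
    ∀ x : β → M, φ.Realize (Sum.elim b x) → ∃ j, (ψs j).Realize (Sum.elim (cs j) x)

/-- A set of formulas (partial type) `P` in the variables `β` divides over `A` :
some finite conjunction of its members divides over `A`. -/
def SetDivides (A : Set M) {β : Type*}
    (P : ∀ n : ℕ, L.Formula (Fin n ⊕ β) → (Fin n → M) → Prop) : Prop :=
  ∃ (k : ℕ) (ns : Fin k → ℕ) (φs : ∀ i, L.Formula (Fin (ns i) ⊕ β))
    (bs : ∀ i, Fin (ns i) → M),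
    (∀ i, P (ns i) (φs i) (bs i)) ∧ FamilyDivides L A k ns φs bs

/-- A set of formulas (partial type) `P` in the variables `β` forks over `A` :
some finite conjunction of its members implies a finite disjunction of formulas
each dividing over `A`. -/
def SetForks (A : Set M) {β : Type*}
    (P : ∀ n : ℕ, L.Formula (Fin n ⊕ β) → (Fin n → M) → Prop) : Prop :=
  ∃ (k : ℕ) (ns : Fin k → ℕ) (φs : ∀ i, L.Formula (Fin (ns i) ⊕ β))
    (bs : ∀ i, Fin (ns i) → M),
    (∀ i, P (ns i) (φs i) (bs i)) ∧
    ∃ (m : ℕ) (ms : Fin m → ℕ) (ψs : ∀ j, L.Formula (Fin (ms j) ⊕ β))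
      (cs : ∀ j, Fin (ms j) → M),
      (∀ j, Divides L A (ψs j) (cs j)) ∧
      ∀ x : β → M, (∀ i, (φs i).Realize (Sum.elim (bs i) x)) →
        ∃ j, (ψs j).Realize (Sum.elim (cs j) x)

/-- The (complete) type of the tuple `a` over the set `B`, as a set of formulas. -/
def TpMem (B : Set M) {β : Type*} (a : β → M) :
    ∀ n : ℕ, L.Formula (Fin n ⊕ β) → (Fin n → M) → Prop :=
  fun _n φ b => (∀ t, b t ∈ B) ∧ φ.Realize (Sum.elim b a)

/-- A complete type over the set `B` in the variables `β`, finitely realized in the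
monster `M` (i.e. consistent). With `B = Set.univ` this is a *global* type. -/
structure TypeOver (B : Set M) (β : Type v) : Type (max u v) where
  mem : ∀ n : ℕ, L.Formula (Fin n ⊕ β) → (Fin n → M) → Prop
  params_mem : ∀ n φ b, mem n φ b → ∀ t, b t ∈ B
  finitely_realized :
    ∀ (k : ℕ) (ns : Fin k → ℕ) (φs : ∀ i, L.Formula (Fin (ns i) ⊕ β))
      (bs : ∀ i, Fin (ns i) → M), (∀ i, mem (ns i) (φs i) (bs i)) →
      ∃ x : β → M, ∀ i, (φs i).Realize (Sum.elim (bs i) x)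
  complete : ∀ n φ b, (∀ t, b t ∈ B) → mem n φ b ∨ mem n φ.not b

/-- The tuple `a` realizes the type `p`. -/
def RealizesOver {B : Set M} {β : Type*} (p : TypeOver L B β) (a : β → M) : Prop :=
  ∀ n φ b, p.mem n φ b → φ.Realize (Sum.elim b a)

/-- The tuple `a` realizes the set of formulas `P`. -/
def RealizesPred {β : Type*}
    (P : ∀ n : ℕ, L.Formula (Fin n ⊕ β) → (Fin n → M) → Prop) (a : β → M) : Prop :=
  ∀ n φ b, P n φ b → φ.Realize (Sum.elim b a)

/-- The tuple `a` realizes the restriction `p ↾ C` of the type `p` to parameters in `C`. -/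
def RealizesRestrict {B : Set M} {β : Type*} (p : TypeOver L B β) (C : Set M)
    (a : β → M) : Prop :=
  ∀ n φ b, (∀ t, b t ∈ C) → p.mem n φ b → φ.Realize (Sum.elim b a)

/-- The type `q` extends the type `p` (as sets of formulas). -/
def ExtendsT {B B' : Set M} {β : Type*} (q : TypeOver L B' β) (p : TypeOver L B β) : Prop :=
  ∀ n φ b, p.mem n φ b → q.mem n φ b

/-- The complete type of the tuple `a` over the set `B`, bundled. -/
def tpOver (B : Set M) {β : Type*} (a : β → M) : TypeOver L B β where
  mem := TpMem L B a
  params_mem := fun _ _ _ h => h.1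
  finitely_realized := fun _ _ _ _ h => ⟨a, fun i => (h i).2⟩
  complete := fun _n φ b hb => by
    by_cases hr : φ.Realize (Sum.elim b a)
    · exact Or.inl ⟨hb, hr⟩
    · exact Or.inr ⟨hb, by simpa [TpMem] using hr⟩

/-- A Morley (nonforking) sequence over `A`: an `A`-indiscernible sequence such that
`tp(a_i / A ∪ a_{<i})` does not fork over `A` for every `i`. -/
def MorleySeq (A : Set M) {O : Type*} [LinearOrder O] {β : Type*} (I : O → β → M) : Prop :=
  IndiscOver L A I ∧ ∀ i : O, ¬ SetForks L A (TpMem L (A ∪ below I i) (I i))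

/-- The (global or partial) type `P` Lascar-splits over `A`. -/
def LascarSplits (A : Set M) {β : Type*}
    (P : ∀ n : ℕ, L.Formula (Fin n ⊕ β) → (Fin n → M) → Prop) : Prop :=
  ∃ (n : ℕ) (φ : L.Formula (Fin n ⊕ β)) (b b' : Fin n → M),
    SameLstp L A b b' ∧ P n φ b ∧ P n φ.not b'

/-- The (global or partial) type `P` splits over `A`. -/
def Splits (A : Set M) {β : Type*}
    (P : ∀ n : ℕ, L.Formula (Fin n ⊕ β) → (Fin n → M) → Prop) : Prop :=
  ∃ (n : ℕ) (φ : L.Formula (Fin n ⊕ β)) (b b' : Fin n → M),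
    SameTp L A b b' ∧ P n φ b ∧ P n φ.not b'

/-- A bundled linearly ordered index type together with a sequence of `β`-tuples;
used to quantify over sequences of arbitrary order type. -/
structure LinSeq (N : Type u) (β : Type v) : Type (max (u + 1) v) where
  carrier : Type u
  [ord : LinearOrder carrier]
  seq : carrier → β → N

attribute [instance] LinSeq.ord

/-- `I` is a Lascar special (weakly special) sequence over `A`: it is `A`-indiscernible,
and any two realizations of its Lascar strong type over `A` have a common one-element
extension to an `A`-indiscernible sequence. -/
def LascarSpecial (A : Set M) {O : Type*} [LinearOrder O] {β : Type*} (I : O → β → M) : Prop :=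
  IndiscOver L A I ∧
  ∀ I₁ I₂ : O → β → M,
    SameLstp L A (seqUncurry I) (seqUncurry I₁) →
    SameLstp L A (seqUncurry I) (seqUncurry I₂) →
    ∃ c : β → M, IndiscOver L A (consTop I₁ c) ∧ IndiscOver L A (consTop I₂ c)

/-- The Ehrenfeucht–Mostowski type of `I` over `A` is special (Poizat): any two
realizations of it have a common one-element extension to an `A`-indiscernible sequence. -/
def SpecialEM (A : Set M) {O : Type*} [LinearOrder O] {β : Type*} (I : O → β → M) : Prop :=
  ∀ (S₁ S₂ : LinSeq M β), SameEM L A I S₁.seq → SameEM L A I S₂.seq →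
    ∃ c : β → M, IndiscOver L A (consTop S₁.seq c) ∧ IndiscOver L A (consTop S₂.seq c)

/-- The limit truth value of `φ(x, b)` along the sequence `J` is `v`. -/
def LimitVal {O : Type*} [LinearOrder O] {β : Type*} {n : ℕ} (J : O → β → M)
    (φ : L.Formula (Fin n ⊕ β)) (b : Fin n → M) (v : Bool) : Prop :=
  ∃ i₀ : O, ∀ i, i₀ ≤ i → (φ.Realize (Sum.elim b (J i)) ↔ v = true)

/-- `J` eventually determines `φ(x, b)` with value `v`: along every `A`-indiscernible
sequence (with no last element) continuing `J`, the limit truth value of `φ(x, b)`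
is `v`. -/
def EvDetermines (A : Set M) {O : Type*} [LinearOrder O] {β : Type*} {n : ℕ}
    (J : O → β → M) (φ : L.Formula (Fin n ⊕ β)) (b : Fin n → M) (v : Bool) : Prop :=
  ∀ S : LinSeq M β, Nonempty S.carrier → NoMaxOrder S.carrier →
    Continues L A J S.seq → LimitVal L S.seq φ b v

/-- Membership in the eventual type `Ev(I)` of a (Lascar special) sequence `I` over `A`:
`φ(x, b) ∈ Ev(I)` iff some sequence with the same Lascar strong type as `I` over `A`
has an indiscernible continuation which eventually determines `φ(x, b)` with limit
value "true". -/
def EvMem (A : Set M) {O : Type*} [LinearOrder O] {β : Type*} (I : O → β → M)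
    (n : ℕ) (φ : L.Formula (Fin n ⊕ β)) (b : Fin n → M) : Prop :=
  ∃ I' : O → β → M, SameLstp L A (seqUncurry I) (seqUncurry I') ∧
    ∃ S : LinSeq M β, Nonempty S.carrier ∧ NoMaxOrder S.carrier ∧
      Continues L A I' S.seq ∧ EvDetermines L A (concatSeq I' S.seq) φ b true

/-- The type `P ∈ S(A)` is generically stable: some Morley sequence over `A` of
realizations of `P` is an indiscernible set over `A`. -/
def GenStable (A : Set M) {β : Type*}
    (P : ∀ n : ℕ, L.Formula (Fin n ⊕ β) → (Fin n → M) → Prop) : Prop :=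
  ∃ J : ℕ → β → M, MorleySeq L A J ∧ (∀ i, RealizesPred L P (J i)) ∧ IndiscSetOver L A J

/-- `S` is (the underlying set of) an elementary submodel of the monster `M`
(via the Tarski–Vaught test). -/
def ElemSubmodel (S : Set M) : Prop :=
  S.Nonempty ∧
  ∀ (n : ℕ) (φ : L.Formula (Fin n ⊕ Fin 1)) (b : Fin n → M), (∀ t, b t ∈ S) →
    (∃ x : M, φ.Realize (Sum.elim b fun _ => x)) →
    ∃ x ∈ S, φ.Realize (Sum.elim b fun _ => x)

/-- `N` is `κ`-saturated (as a subset of the monster): every consistent type over a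
subset of `N` of cardinality `< κ` is realized in `N`. -/
def SatOver (N : Set M) (κ : Cardinal.{u}) : Prop :=
  ∀ B : Set M, B ⊆ N → Cardinal.mk B < κ →
    ∀ (r : ℕ) (q : TypeOver L B (Fin r)),
      ∃ a : Fin r → M, (∀ i, a i ∈ N) ∧ RealizesOver L q a

/-- `p ∈ S(B)` is a heir of its restriction to `MS`: every formula (over `MS`) with
parameters in `B` belonging to `p` also occurs in `p` with parameters from `MS`. -/
def Heir (MS : Set M) {B : Set M} {β : Type*} (p : TypeOver L B β) : Prop :=
  ∀ n φ b, p.mem n φ b → ∃ b' : Fin n → M, (∀ t, b' t ∈ MS) ∧ p.mem n φ b'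

/-- `p` is a coheir of its restriction to `MS`: `p` is finitely satisfiable in `MS`. -/
def Coheir (MS : Set M) {B : Set M} {β : Type*} (p : TypeOver L B β) : Prop :=
  ∀ (k : ℕ) (ns : Fin k → ℕ) (φs : ∀ i, L.Formula (Fin (ns i) ⊕ β))
    (bs : ∀ i, Fin (ns i) → M),
    (∀ i, p.mem (ns i) (φs i) (bs i)) →
    ∃ x : β → M, (∀ t, x t ∈ MS) ∧ ∀ i, (φs i).Realize (Sum.elim (bs i) x)

/-- `p ∈ S(B)` is a strictly nondividing extension of `p ↾ A` : `p` does not divide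
over `A` (equivalently, `tp(a/B)` does not divide over `A` for `a ⊨ p`), and for every
realization `a` of `p` the type of every tuple from `B` over `A ∪ a` does not divide
over `A` (i.e. `tp(B / A ∪ a)` does not divide over `A`). -/
def StrictlyNonDividing (A : Set M) {B : Set M} {β : Type*} (p : TypeOver L B β) : Prop :=
  (¬ SetDivides L A p.mem) ∧
  ∀ a : β → M, RealizesOver L p a →
    ∀ (m : ℕ) (c : Fin m → M), (∀ t, c t ∈ B) →
      ¬ SetDivides L A (TpMem L (A ∪ Set.range a) c)

/-- `p ∈ S(B)` is strictly free (strictly nonforking) over `A`: some global extension of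
`p` is a strictly nondividing extension of `p ↾ A`. -/
def StrictlyFree (A : Set M) {B : Set M} {β : Type*} (p : TypeOver L B β) : Prop :=
  ∃ q : TypeOver L (Set.univ : Set M) β, ExtendsT L q p ∧ StrictlyNonDividing L A q

/-- A strict Morley sequence in the type `p ∈ S(A)` : an `A`-indiscernible sequence of
realizations of `p` such that `tp(a_i / A ∪ a_{<i})` is strictly free over `A` for
every `i`. -/
def StrictMorleyIn (A : Set M) {β : Type*} (p : TypeOver L A β) {O : Type*}
    [LinearOrder O] (I : O → β → M) : Prop :=
  IndiscOver L A I ∧ (∀ i, RealizesOver L p (I i)) ∧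
  ∀ i : O, StrictlyFree L A (tpOver L (A ∪ below I i) (I i))


/-!
If no realization of the EM type of `I` eventually determines `φ(x, b)`, then, by NIP, every
such realization has, for each truth value `v`, an `A`-indiscernible continuation along which
the limit value of `φ(x, b)` is `¬ v`. Starting from `I` and appending such continuations with
alternating limit values, the union of this ω-chain is an `A`-indiscernible sequence along
which `φ(x, b)` changes its truth value cofinally, contradicting NIP.
-/

structure Continuation (A : Set M) {O : Type*} [LinearOrder O] {β : Type v} (J : O → β → M) :
    Type (max (u + 1) v) where
  S : LinSeq M β
  nonempty : Nonempty S.carrier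
  noMaxOrder : NoMaxOrder S.carrier
  continues : Continues L A J S.seq

attribute [instance] Continuation.nonempty Continuation.noMaxOrder

structure EMRealization (A : Set M) {O : Type*} [LinearOrder O] {β : Type v} (I : O → β → M) :
    Type (max (u + 1) v) where
  S : LinSeq M β
  nonempty : Nonempty S.carrier
  noMaxOrder : NoMaxOrder S.carrier
  sameEM : SameEM L A I S.seq

attribute [instance] EMRealization.nonempty EMRealization.noMaxOrder

section Development

variable {L}

theorem IndiscOver.mono {A B : Set M} (hAB : A ⊆ B) {O : Type*} [LinearOrder O] {β : Type*}
    {I : O → β → M} (h : IndiscOver L B I) : IndiscOver L A I :=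
  fun m k φ as has => h m k φ as fun t => hAB (has t)

theorem Continues.indiscOver_right {A : Set M} {O O' : Type*} [LinearOrder O] [LinearOrder O']
    {β : Type*} {I : O → β → M} {J : O' → β → M} (h : Continues L A I J) :
    IndiscOver L A J :=
  fun m k φ as has i j hi hj =>
    h m k φ as has (fun t => toLex (Sum.inr (i t))) (fun t => toLex (Sum.inr (j t)))
      (fun _ _ hab => Sum.Lex.inr_lt_inr_iff.mpr (hi hab))
      (fun _ _ hab => Sum.Lex.inr_lt_inr_iff.mpr (hj hab))

theorem exists_strictMono_fin (α : Type*) [Preorder α] [Nonempty α] [NoMaxOrder α] (k : ℕ) :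
    ∃ f : Fin k → α, StrictMono f :=
  let ⟨g, hg⟩ := Nat.exists_strictMono α
  ⟨g ∘ Fin.val, hg.comp Fin.val_strictMono⟩

theorem SameEM.indiscOver_right {A : Set M} {O O' : Type*} [LinearOrder O] [Nonempty O]
    [NoMaxOrder O] [LinearOrder O'] {β : Type*} {I : O → β → M} {J : O' → β → M}
    (h : SameEM L A I J) : IndiscOver L A J := by
  intro m k φ as has i j hi hj
  obtain ⟨f, hf⟩ := exists_strictMono_fin O k
  exact (h m k φ as has f i hf hi).symm.trans (h m k φ as has f j hf hj)

theorem SameEM.concatSeq {A : Set M} {O O' O'' : Type*} [LinearOrder O] [LinearOrder O']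
    [Nonempty O'] [NoMaxOrder O'] [LinearOrder O''] {β : Type*} {I : O → β → M}
    {J : O' → β → M} {C : O'' → β → M} (h : SameEM L A I J) (hC : Continues L A J C) :
    SameEM L A I (concatSeq J C) := by
  intro m k φ as has i w hi hw
  obtain ⟨f, hf⟩ := exists_strictMono_fin O' k
  exact (h m k φ as has i f hi hf).trans
    (hC m k φ as has (fun t => toLex (Sum.inl (f t))) w
      (fun _ _ hab => Sum.Lex.inl_lt_inl_iff.mpr (hf hab)) hw)

theorem IndiscOver.of_strictMono_cover {A : Set M} {ι : Type*} {l : Filter ι} [l.NeBot]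
    {W : Type*} [LinearOrder W] {β : Type*} {s : W → β → M} {T : ι → Type*}
    [∀ k, LinearOrder (T k)] {e : ∀ k, T k → W} (he : ∀ k, StrictMono (e k))
    (hind : ∀ k, IndiscOver L A (s ∘ e k)) (hcover : ∀ w, ∀ᶠ k in l, w ∈ Set.range (e k)) :
    IndiscOver L A s := by
  intro m k φ as has i j hi hj
  obtain ⟨K, hiK, hjK⟩ := ((Filter.eventually_all.2 fun t => hcover (i t)).and
    (Filter.eventually_all.2 fun t => hcover (j t))).exists
  choose i' hi' using hiK
  choose j' hj' using hjK
  have hi'_mono : StrictMono i' := fun a b hab =>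
    (he K).lt_iff_lt.mp (by simpa only [hi'] using hi hab)
  have hj'_mono : StrictMono j' := fun a b hab =>
    (he K).lt_iff_lt.mp (by simpa only [hj'] using hj hab)
  simpa only [Function.comp_apply, hi', hj'] using hind K m k φ as has i' j' hi'_mono hj'_mono

theorem Dependent.exists_limitVal (hT : Dependent L (M := M)) {A : Set M} {O : Type u}
    [LinearOrder O] [Nonempty O] [NoMaxOrder O] {r : ℕ} {J : O → Fin r → M}
    (hJ : IndiscOver L A J) {n : ℕ} (φ : L.Formula (Fin n ⊕ Fin r)) (b : Fin n → M) :
    ∃ v, LimitVal L J φ b v := by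
  classical
  obtain ⟨i₀, hc⟩ := hT O r J (hJ.mono (Set.empty_subset A)) n φ b
  exact ⟨decide (φ.Realize (Sum.elim b (J i₀))), i₀, fun i hi => by
    simpa only [decide_eq_true_eq] using hc i i₀ hi le_rfl⟩

theorem Dependent.exists_continuation_limitVal_not (hT : Dependent L (M := M)) {A : Set M}
    {O : Type*} [LinearOrder O] {r : ℕ} {J : O → Fin r → M} {n : ℕ}
    {φ : L.Formula (Fin n ⊕ Fin r)} {b : Fin n → M} {v : Bool}
    (h : ¬ EvDetermines L A J φ b v) :
    ∃ C : Continuation L A J, LimitVal L C.S.seq φ b (!v) := by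
  simp only [EvDetermines, not_forall] at h
  obtain ⟨S, hne, hnm, hcont, hv⟩ := h
  obtain ⟨v', hv'⟩ := hT.exists_limitVal hcont.indiscOver_right φ b
  have hne' : v' ≠ v := fun h => hv (h ▸ hv')
  exact ⟨⟨S, hne, hnm, hcont⟩, by rwa [Bool.eq_not_iff.mpr hne'] at hv'⟩

namespace EMRealization

variable {A : Set M} {O : Type*} [LinearOrder O] {β : Type v} {I : O → β → M}

def append (R : EMRealization L A I) (C : Continuation L A R.S.seq) :
    EMRealization L A I where
  S := ⟨R.S.carrier ⊕ₗ C.S.carrier, concatSeq R.S.seq C.S.seq⟩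
  nonempty := inferInstance
  noMaxOrder := inferInstance
  sameEM := R.sameEM.concatSeq C.continues

variable (R₀ : EMRealization L A I)
  (next : ∀ R : EMRealization L A I, ℕ → Continuation L A R.S.seq)

def stage : ℕ → EMRealization L A I
  | 0 => R₀
  | k + 1 => (stage k).append (next (stage k) k)

def chunk (k : ℕ) : Continuation L A (R₀.stage next k).S.seq :=
  next (R₀.stage next k) k

/-- The union of the chain `R₀.stage next`. -/
def limit : LinSeq M β :=
  ⟨R₀.S.carrier ⊕ₗ Σₗ k, (R₀.chunk next k).S.carrier,
    concatSeq R₀.S.seq fun p => (R₀.chunk next p.1).S.seq p.2⟩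

def stageEmb : ∀ k, (R₀.stage next k).S.carrier → (R₀.limit next).carrier
  | 0 => fun a => toLex (Sum.inl a)
  | k + 1 => fun w =>
    Sum.elim (stageEmb k) (fun x => toLex (Sum.inr (toLex ⟨k, x⟩))) (ofLex w)

variable {R₀ next}

theorem limit_seq_stageEmb (k : ℕ) (w : (R₀.stage next k).S.carrier) :
    (R₀.limit next).seq (R₀.stageEmb next k w) = (R₀.stage next k).S.seq w := by
  induction k with
  | zero => rfl
  | succ k ih =>
    obtain ⟨a | x, rfl⟩ := toLex.surjective w
    · exact ih a
    · rfl

theorem stageEmb_lt_chunk {k j : ℕ} (hkj : k ≤ j) (w : (R₀.stage next k).S.carrier)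
    (x : (R₀.chunk next j).S.carrier) :
    R₀.stageEmb next k w < toLex (Sum.inr (toLex ⟨j, x⟩)) := by
  induction k with
  | zero => exact Sum.Lex.sep _ _
  | succ k ih =>
    obtain ⟨a | y, rfl⟩ := toLex.surjective w
    · exact ih (Nat.le_of_succ_le hkj) a
    · exact Sum.Lex.inr (Sigma.Lex.left _ _ hkj)

theorem stageEmb_strictMono (k : ℕ) : StrictMono (R₀.stageEmb next k) := by
  induction k with
  | zero => exact fun _ _ h => Sum.Lex.inl_lt_inl_iff.mpr h
  | succ k ih =>
    intro w w' hlt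
    obtain ⟨a | x, rfl⟩ := toLex.surjective w <;> obtain ⟨a' | x', rfl⟩ := toLex.surjective w'
    · exact ih (Sum.Lex.inl_lt_inl_iff.mp hlt)
    · exact stageEmb_lt_chunk le_rfl a x'
    · exact absurd hlt Sum.Lex.not_inr_lt_inl
    · exact Sum.Lex.inr (Sigma.Lex.right _ _ (Sum.Lex.inr_lt_inr_iff.mp hlt))

theorem range_stageEmb_mono : Monotone fun k => Set.range (R₀.stageEmb next k) :=
  monotone_nat_of_le_succ fun k => by
    rintro _ ⟨w, rfl⟩
    exact ⟨toLex (Sum.inl w), rfl⟩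

theorem eventually_mem_range_stageEmb (w : (R₀.limit next).carrier) :
    ∀ᶠ k in Filter.atTop, w ∈ Set.range (R₀.stageEmb next k) := by
  obtain ⟨a | p, rfl⟩ := toLex.surjective w
  · exact Filter.Eventually.of_forall fun k => range_stageEmb_mono (Nat.zero_le k) ⟨a, rfl⟩
  · obtain ⟨⟨j, x⟩, rfl⟩ := toLex.surjective p
    exact Filter.eventually_atTop.2
      ⟨j + 1, fun k hk => range_stageEmb_mono hk ⟨toLex (Sum.inr x), rfl⟩⟩

theorem eventually_lt_chunk (w : (R₀.limit next).carrier) :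
    ∀ᶠ j in Filter.atTop, ∀ x : (R₀.chunk next j).S.carrier,
      w < toLex (Sum.inr (toLex ⟨j, x⟩)) := by
  obtain ⟨a | p, rfl⟩ := toLex.surjective w
  · exact Filter.Eventually.of_forall fun j x => Sum.Lex.sep _ _
  · obtain ⟨⟨i, y⟩, rfl⟩ := toLex.surjective p
    exact Filter.eventually_atTop.2 ⟨i + 1, fun j hj x => Sum.Lex.inr (Sigma.Lex.left _ _ hj)⟩

theorem limit_indiscOver [Nonempty O] [NoMaxOrder O] : IndiscOver L A (R₀.limit next).seq :=
  IndiscOver.of_strictMono_cover (l := Filter.atTop) stageEmb_strictMono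
    (fun k => by
      rw [show (R₀.limit next).seq ∘ R₀.stageEmb next k = (R₀.stage next k).S.seq from
        funext (limit_seq_stageEmb k)]
      exact (R₀.stage next k).sameEM.indiscOver_right)
    eventually_mem_range_stageEmb

instance : Nonempty (R₀.limit next).carrier :=
  inferInstanceAs (Nonempty (_ ⊕ₗ _))

instance : NoMaxOrder (R₀.limit next).carrier :=
  inferInstanceAs (NoMaxOrder (_ ⊕ₗ Σₗ k, (R₀.chunk next k).S.carrier))

end EMRealization

theorem Dependent.eventually_const_limitVal_chunk (hT : Dependent L (M := M)) {A : Set M}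
    {O : Type*} [LinearOrder O] [Nonempty O] [NoMaxOrder O] {r : ℕ} {I : O → Fin r → M}
    (R₀ : EMRealization L A I) (next : ∀ R : EMRealization L A I, ℕ → Continuation L A R.S.seq)
    {n : ℕ} {φ : L.Formula (Fin n ⊕ Fin r)} {b : Fin n → M} {v : ℕ → Bool}
    (hv : ∀ k, LimitVal L (R₀.chunk next k).S.seq φ b (v k)) :
    ∃ K, ∀ j₁ j₂, K ≤ j₁ → K ≤ j₂ → v j₁ = v j₂ := by
  obtain ⟨i₀, hc⟩ := hT _ r _ (R₀.limit_indiscOver.mono (Set.empty_subset A)) n φ b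
  obtain ⟨K, hK⟩ := Filter.eventually_atTop.1 (EMRealization.eventually_lt_chunk i₀)
  have hval : ∀ j, K ≤ j → ∃ w, i₀ ≤ w ∧
      (φ.Realize (Sum.elim b ((R₀.limit next).seq w)) ↔ v j = true) := fun j hj =>
    let ⟨x, hx⟩ := hv j
    ⟨_, (hK j hj x).le, hx x le_rfl⟩
  refine ⟨K, fun j₁ j₂ h₁ h₂ => ?_⟩
  obtain ⟨w₁, hw₁, h₁⟩ := hval j₁ h₁
  obtain ⟨w₂, hw₂, h₂⟩ := hval j₂ h₂
  exact Bool.eq_iff_iff.mpr (h₁.symm.trans ((hc w₁ w₂ hw₁ hw₂).trans h₂))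

theorem EMRealization.exists_evDetermines (hT : Dependent L (M := M)) {A : Set M}
    {O : Type*} [LinearOrder O] [Nonempty O] [NoMaxOrder O] {r : ℕ} {I : O → Fin r → M}
    (R₀ : EMRealization L A I) {n : ℕ} (φ : L.Formula (Fin n ⊕ Fin r)) (b : Fin n → M) :
    ∃ R : EMRealization L A I, ∃ v, EvDetermines L A R.S.seq φ b v := by
  by_contra! hneg
  choose next hnext using fun (R : EMRealization L A I) (k : ℕ) =>
    hT.exists_continuation_limitVal_not (hneg R (decide (Even k)))
  obtain ⟨K, hK⟩ := hT.eventually_const_limitVal_chunk R₀ next fun k => hnext _ k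
  have := hK K (K + 1) le_rfl K.le_succ
  simp only [Nat.even_add_one, decide_not, Bool.not_not] at this
  exact Bool.not_ne_self _ this

end Development

/-- Let `Q` be the EM type over `A` of a Lascar special sequence `I` over
`A`, and `φ(x, b)` a formula. Then some realization `J` of `Q` eventually determines
`φ(x, b)`: the limit truth value of `φ(x, b)` is the same along every `A`-indiscernible
continuation of `J`. -/
theorem statement_5
    (hT : Dependent L (M := M))
    (A : Set M) (r : ℕ)
    (O : Type u) [LinearOrder O] [Nonempty O] [NoMaxOrder O]
    (I : O → Fin r → M) (hspec : LascarSpecial L A I)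
    (n : ℕ) (φ : L.Formula (Fin n ⊕ Fin r)) (b : Fin n → M) :
    ∃ S : LinSeq M (Fin r), Nonempty S.carrier ∧ NoMaxOrder S.carrier ∧
      SameEM L A I S.seq ∧ ∃ v : Bool, EvDetermines L A S.seq φ b v := by
  obtain ⟨R, v, hv⟩ :=
    EMRealization.exists_evDetermines hT ⟨⟨O, I⟩, inferInstance, inferInstance, hspec.1⟩ φ b
  exact ⟨R.S, R.nonempty, R.noMaxOrder, R.sameEM, v, hv⟩

end PaperNIP
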